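/- Let q be a 2×2 complex matrix with q² = q and rank q = 1, and let A be a 2×2 complex matrix with qA + Aq = A. Then 2·Tr(q*q) − 1 is a real number ≥ 1, and the matrix J'(A) := (i/√(2·Tr(q*q) − 1)) · [q, A*] satisfies: (i) q·J'(A) + J'(A)·q = J'(A); (ii) J'(J'(A)) = −A; and (iii) J'(iA) = −i·J'(A). That is, J' is a complex structure on the tangent space of T*ℙ¹ (realized as rank-one projections on ℂ²) that anticommutes with the complex structure A ↦ iA. -/

import Mathlib

/-!
Since `q` is an idempotent of rank one, `Tr q = 1`, and AM–GM entrywise gives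
`Tr(qᴴq) = ∑ |q_ij|² ≥ |∑ q_ij q_ji| = |Tr q²| = 1`. Polarizing Cayley–Hamilton for `2×2` matrices gives
`q qᴴ + qᴴ q = q + qᴴ + (Tr(qᴴq) − 1)`, and substituting this into the expansion of the double
commutator shows `[q, [A, qᴴ]] = −(2 Tr(qᴴq) − 1) A` for every tangent vector `A`. With
`J'(X) = c [q, Xᴴ]` this gives `J'(J'(A)) = −|c|² (2 Tr(qᴴq) − 1) A = −A`. The commutator `[q, Y]`
with an idempotent is always tangent, and `J'` is conjugate-linear because of the adjoint.
-/

open Matrix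

theorem Matrix.trace_eq_rank_of_isIdempotentElem {K n : Type*} [Field K] [Fintype n]
    [DecidableEq n] {q : Matrix n n K} (hq : IsIdempotentElem q) : q.trace = q.rank := by
  have hlin : IsIdempotentElem q.toLin' := hq.map Matrix.toLinAlgEquiv'
  rw [← trace_toLin'_eq, (LinearMap.IsIdempotentElem.isProj_range _ hlin).trace, rank,
    toLin'_apply']

theorem Matrix.trace_conjTranspose_mul_self_eq_sum_normSq {m n : Type*} [Fintype m] [Fintype n]
    (q : Matrix m n ℂ) : (qᴴ * q).trace = ((∑ i, ∑ j, Complex.normSq (q i j) : ℝ) : ℂ) := by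
  simp only [trace, diag_apply, mul_apply, conjTranspose_apply, RCLike.star_def,
    Complex.ofReal_sum, Complex.normSq_eq_conj_mul_self]
  exact Finset.sum_comm

theorem Matrix.im_trace_conjTranspose_mul_self {m n : Type*} [Fintype m] [Fintype n]
    (q : Matrix m n ℂ) : (qᴴ * q).trace.im = 0 := by
  rw [trace_conjTranspose_mul_self_eq_sum_normSq, Complex.ofReal_im]

theorem Matrix.norm_trace_mul_self_le {n : Type*} [Fintype n] (q : Matrix n n ℂ) :
    ‖(q * q).trace‖ ≤ ∑ i, ∑ j, Complex.normSq (q i j) := by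
  have hamgm (i j : n) :
      ‖q i j * q j i‖ ≤ (Complex.normSq (q i j) + Complex.normSq (q j i)) / 2 := by
    rw [norm_mul, ← Complex.sq_norm, ← Complex.sq_norm]
    nlinarith [sq_nonneg (‖q i j‖ - ‖q j i‖)]
  calc ‖(q * q).trace‖ ≤ ∑ i, ∑ j, ‖q i j * q j i‖ :=
        (norm_sum_le _ _).trans (Finset.sum_le_sum fun i _ => norm_sum_le _ _)
    _ ≤ ∑ i, ∑ j, (Complex.normSq (q i j) + Complex.normSq (q j i)) / 2 :=
        Finset.sum_le_sum fun i _ => Finset.sum_le_sum fun j _ => hamgm i j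
    _ = ((∑ i, ∑ j, Complex.normSq (q i j)) + ∑ i, ∑ j, Complex.normSq (q j i)) / 2 := by
        simp only [add_div, Finset.sum_add_distrib, Finset.sum_div]
    _ = ∑ i, ∑ j, Complex.normSq (q i j) := by
        rw [Finset.sum_comm (f := fun i j => Complex.normSq (q j i))]
        ring

theorem Matrix.rank_le_re_trace_conjTranspose_mul_self {n : Type*} [Fintype n] [DecidableEq n]
    {q : Matrix n n ℂ} (hq : IsIdempotentElem q) : (q.rank : ℝ) ≤ (qᴴ * q).trace.re := by
  calc (q.rank : ℝ) = ‖(q * q).trace‖ := by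
        rw [hq.eq, trace_eq_rank_of_isIdempotentElem hq, Complex.norm_natCast]
    _ ≤ ∑ i, ∑ j, Complex.normSq (q i j) := norm_trace_mul_self_le q
    _ = (qᴴ * q).trace.re := by
        rw [trace_conjTranspose_mul_self_eq_sum_normSq, Complex.ofReal_re, Finset.sum_comm]

theorem Matrix.mul_add_mul_fin_two {R : Type*} [CommRing R] (X Y : Matrix (Fin 2) (Fin 2) R) :
    X * Y + Y * X = X.trace • Y + Y.trace • X + ((X * Y).trace - X.trace * Y.trace) • 1 := by
  ext i j
  fin_cases i <;> fin_cases j <;> simp [mul_apply, trace_fin_two] <;> ring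

section IsTangentAt

variable {R : Type*} [Ring R]

def IsTangentAt (q A : R) : Prop := q * A + A * q = A

theorem isTangentAt_commutator {q : R} (hq : IsIdempotentElem q) (Y : R) :
    IsTangentAt q (q * Y - Y * q) := by
  rw [IsTangentAt, mul_sub, sub_mul, ← mul_assoc q q Y, hq.eq, mul_assoc Y q q, hq.eq,
    ← mul_assoc q Y q]
  abel

theorem IsTangentAt.commutator_commutator {K : Type*} [CommRing K] [Algebra K R] {q p A : R}
    {s : K} (hA : IsTangentAt q A) (hqp : q * p + p * q = q + p + s • 1) :
    q * (A * p - p * A) - (A * p - p * A) * q = -((2 * s + 1) • A) := by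
  rw [IsTangentAt] at hA
  calc q * (A * p - p * A) - (A * p - p * A) * q
      = (q * A + A * q) * p + p * (q * A + A * q)
          - ((q * p + p * q) * A + A * (q * p + p * q)) := by
        noncomm_ring
    _ = A * p + p * A - ((q + p + s • 1) * A + A * (q + p + s • 1)) := by rw [hA, hqp]
    _ = -(q * A + A * q) - (2 * s) • A := by
        simp only [add_mul, mul_add, smul_mul_assoc, one_mul, mul_smul_comm, mul_one]
        module
    _ = -((2 * s + 1) • A) := by rw [hA]; module

end IsTangentAt

section ConjCommutator

variable {n : Type*} [Fintype n]

/-- With `c = i / √(2 Tr(qᴴq) − 1)` this is the map `J'`. -/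
def conjCommutator (c : ℂ) (q X : Matrix n n ℂ) : Matrix n n ℂ := c • (q * Xᴴ - Xᴴ * q)

theorem isTangentAt_conjCommutator [DecidableEq n] {q : Matrix n n ℂ} (hq : IsIdempotentElem q)
    (c : ℂ) (X : Matrix n n ℂ) : IsTangentAt q (conjCommutator c q X) := by
  rw [IsTangentAt, conjCommutator, Matrix.mul_smul, Matrix.smul_mul, ← smul_add]
  exact congrArg (c • ·) (isTangentAt_commutator hq Xᴴ)

theorem conjCommutator_smul (c z : ℂ) (q X : Matrix n n ℂ) :
    conjCommutator c q (z • X) = star z • conjCommutator c q X := by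
  simp only [conjCommutator, conjTranspose_smul, Matrix.mul_smul, Matrix.smul_mul, ← smul_sub,
    smul_comm c (star z)]

theorem IsTangentAt.conjCommutator_conjCommutator [DecidableEq n] {q A : Matrix n n ℂ} {c s : ℂ}
    (hA : IsTangentAt q A) (hqp : q * qᴴ + qᴴ * q = q + qᴴ + s • 1)
    (hc : c * star c * (2 * s + 1) = 1) :
    conjCommutator c q (conjCommutator c q A) = -A := by
  rw [conjCommutator, conjCommutator, conjTranspose_smul, conjTranspose_sub, conjTranspose_mul,
    conjTranspose_mul, conjTranspose_conjTranspose, Matrix.mul_smul, Matrix.smul_mul, ← smul_sub,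
    smul_smul, hA.commutator_commutator hqp, smul_neg, smul_smul, hc, one_smul]

end ConjCommutator

theorem Complex.I_div_sqrt_mul_star_mul_self {r : ℝ} (hr : 0 < r) :
    I / (Real.sqrt r : ℂ) * star (I / (Real.sqrt r : ℂ)) * r = 1 := by
  have hsqrt : (Real.sqrt r : ℂ) ^ 2 = r := by
    rw [← ofReal_pow, Real.sq_sqrt hr.le]
  rw [star_div₀, star_def, conj_I, conj_ofReal, div_mul_div_comm, ← sq, hsqrt, mul_neg, I_mul_I,
    neg_neg, one_div_mul_cancel (ofReal_ne_zero.mpr hr.ne')]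

/-- Let `q` be a rank-one idempotent `2×2` complex matrix and
`A` a tangent vector at `q` (`qA + Aq = A`).  Then `2·Tr(q*q) − 1` is a real
number `≥ 1`, and `J'(X) := (i/√(2·Tr(q*q) − 1)) • [q, X*]` satisfies:
(i) `J'(A)` is again tangent at `q`; (ii) `J'(J'(A)) = −A`;
(iii) `J'(i•A) = −i•J'(A)`, i.e. `J'` is a complex structure on the tangent
space of `T*ℙ¹` anticommuting with `A ↦ i•A`. -/
theorem anticommuting_complex_structure_TP1
    (q A : Matrix (Fin 2) (Fin 2) ℂ)
    (hq : q * q = q) (hrank : q.rank = 1)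
    (hA : q * A + A * q = A) :
    ((2 * (qᴴ * q).trace - 1).im = 0 ∧ 1 ≤ (2 * (qᴴ * q).trace - 1).re) ∧
    (∀ J' : Matrix (Fin 2) (Fin 2) ℂ → Matrix (Fin 2) (Fin 2) ℂ,
      J' = (fun X =>
        (Complex.I / (Real.sqrt ((2 * (qᴴ * q).trace - 1).re) : ℂ)) • (q * Xᴴ - Xᴴ * q)) →
      (q * J' A + J' A * q = J' A) ∧
      (J' (J' A) = -A) ∧
      (J' (Complex.I • A) = -(Complex.I • J' A))) := by
  set t := (qᴴ * q).trace
  have htr : q.trace = 1 := by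
    rw [trace_eq_rank_of_isIdempotentElem hq, hrank, Nat.cast_one]
  have him : t.im = 0 := im_trace_conjTranspose_mul_self q
  have hre : 1 ≤ t.re := by
    simpa [hrank] using rank_le_re_trace_conjTranspose_mul_self hq
  have hre' : (2 * t - 1).re = 2 * t.re - 1 := by simp
  have hreal : 2 * t - 1 = ((2 * t - 1).re : ℂ) := Complex.ext (by simp) (by simp [him])
  refine ⟨⟨by simp [him], by linarith⟩, ?_⟩
  rintro J' rfl
  have hqp : q * qᴴ + qᴴ * q = q + qᴴ + (t - 1) • 1 := by
    rw [mul_add_mul_fin_two, trace_conjTranspose, htr, trace_mul_comm, star_one, one_smul,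
      one_smul, one_mul, add_comm qᴴ q]
  set c : ℂ := Complex.I / (Real.sqrt (2 * t - 1).re : ℂ)
  have hc : c * star c * (2 * (t - 1) + 1) = 1 := by
    convert Complex.I_div_sqrt_mul_star_mul_self (r := (2 * t - 1).re) (by linarith) using 2
    rw [← hreal]; ring
  refine ⟨isTangentAt_conjCommutator hq c A, IsTangentAt.conjCommutator_conjCommutator hA hqp hc,
    ?_⟩
  change conjCommutator c q (Complex.I • A) = -(Complex.I • conjCommutator c q A)
  rw [conjCommutator_smul, Complex.star_def, Complex.conj_I, neg_smul]
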